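/- Let f(x) = E_i f_i(x) with each f_i convex and L-smooth, and suppose there is a common minimizer x⋆ with f_i'(x⋆) = 0 for all i (interpolation/over-parameterization). For the scheme y_{k+1} = (d_k/(d_k + δ_k L)) y_k + (δ_k L/(d_k + δ_k L)) x_k, x_{k+1} = x_k - δ_k f'_{i_k}(y_{k+1}), with d_{k+1} = d_k + δ_k L when δ_k ≤ 1/L and d_{k+1} = d_k + 2δ_k L - δ_k² L² otherwise, one has d_{k+1}(f(y_{k+1}) - f⋆) + (L/2) E_{i_k}‖x_{k+1} - x⋆‖² ≤ d_k (f(y_k) - f⋆) + (L/2)‖x_k - x⋆‖². -/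

import Mathlib

/-!
For a convex `L`-smooth `g` the gradient is co-coercive in the form
`‖g' y - g' x‖² ≤ 2L (g y - g x - ⟪g' x, y - x⟫)`. Interpolation makes `x⋆` a critical point of
every `f_i`, so at `y = y_{k+1}` this gives both `‖f_i' y‖² ≤ 2L (f_i y - f_i x⋆)` and
`‖f_i' y‖² ≤ 2L (f_i x⋆ - f_i y + ⟪f_i' y, y - x⋆⟫)`. The averaging step is equivalent to
`δL (x_k - y) = d_k (y - y_k)`, so the cross term of `‖x_{k+1} - x⋆‖²` splits into a convexity
term `d_k (f_i y - f_i y_k) ≤ d_k ⟪f_i' y, y - y_k⟫` and the second co-coercivity bound; the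
choice of `d_{k+1}` is what lets the leftover `δ² ‖f_i' y‖²` be absorbed (by the first bound when
`δL > 1`). The potential inequality thus holds for every `f_i` separately, and averaging over `i`
gives the theorem.
-/

noncomputable def nextWeight (L δ d : ℝ) : ℝ :=
  if δ ≤ 1 / L then d + δ * L else d + 2 * δ * L - δ ^ 2 * L ^ 2

theorem nextWeight_sub_mul_add_le {L δ d D s : ℝ} (hL : 0 < L) (hδ : 0 ≤ δ) (hs : 0 ≤ s)
    (hsD : s ≤ 2 * L * D) :
    (nextWeight L δ d - d - δ * L) * D + L * δ ^ 2 * s / 2 ≤ δ * s / 2 := by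
  unfold nextWeight
  split_ifs with hsmall
  · have : δ * L ≤ 1 := by rwa [le_div_iff₀ hL] at hsmall
    nlinarith [mul_nonneg hδ hs]
  · have : 1 < δ * L := by rwa [not_le, div_lt_iff₀ hL] at hsmall
    nlinarith [mul_nonneg (mul_nonneg hδ (sub_nonneg.2 this.le)) (sub_nonneg.2 hsD)]

theorem smul_sub_weighted_avg {E : Type*} [AddCommGroup E] [Module ℝ E] {a b : ℝ}
    (ha : 0 ≤ a) (hb : 0 ≤ b) (u v : E) :
    b • (v - ((a / (a + b)) • u + (b / (a + b)) • v))
      = a • ((a / (a + b)) • u + (b / (a + b)) • v - u) := by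
  rcases (add_nonneg ha hb).eq_or_lt with hab | hab
  · obtain ⟨rfl, rfl⟩ : a = 0 ∧ b = 0 := ⟨by linarith, by linarith⟩
    simp
  · match_scalars <;> field_simp <;> ring

section Gradient

open Set InnerProductSpace

variable {E : Type*} [NormedAddCommGroup E] [InnerProductSpace ℝ E] [CompleteSpace E]
  {f : E → ℝ} {f' : E → E} {L : ℝ}

theorem HasGradientAt.hasDerivAt_add_smul {g x v : E} {t : ℝ}
    (hf : HasGradientAt f g (x + t • v)) :
    HasDerivAt (fun s : ℝ => f (x + s • v)) (inner ℝ g v) t := by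
  have hline : HasDerivAt (fun s : ℝ => x + s • v) v t := by
    simpa using ((hasDerivAt_id t).smul_const v).const_add x
  simpa [toDual_apply_apply, Function.comp_def] using
    (hasGradientAt_iff_hasFDerivAt.mp hf).comp_hasDerivAt t hline

theorem ConvexOn.add_inner_le_of_hasGradientAt (hconv : ConvexOn ℝ univ f) {g x : E}
    (hf : HasGradientAt f g x) (y : E) :
    f x + inner ℝ g (y - x) ≤ f y := by
  have hline : ConvexOn ℝ univ (fun t : ℝ => f (x + t • (y - x))) := by
    simpa [Function.comp_def, AffineMap.lineMap_apply_module', add_comm] using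
      hconv.comp_affineMap (AffineMap.lineMap x y)
  have hslope := hline.le_slope_of_hasDerivAt (mem_univ 0) (mem_univ 1) zero_lt_one
    (HasGradientAt.hasDerivAt_add_smul (by simpa using hf))
  simp only [slope_def_field] at hslope
  norm_num at hslope
  linarith

theorem le_add_inner_add_of_lipschitz_gradient (hf : ∀ z, HasGradientAt f (f' z) z)
    (hlip : ∀ a b, ‖f' a - f' b‖ ≤ L * ‖a - b‖) (x y : E) :
    f y ≤ f x + inner ℝ (f' x) (y - x) + L / 2 * ‖y - x‖ ^ 2 := by
  set v := y - x
  let φ : ℝ → ℝ := fun t => f (x + t • v) - inner ℝ (f' x) v * t - L / 2 * ‖v‖ ^ 2 * t ^ 2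
  have hφ : ∀ t : ℝ, HasDerivAt φ
      (inner ℝ (f' (x + t • v)) v - inner ℝ (f' x) v - L * ‖v‖ ^ 2 * t) t := by
    intro t
    have hsq := (hasDerivAt_pow 2 t).const_mul (L / 2 * ‖v‖ ^ 2)
    have hlin := (hasDerivAt_id' t).const_mul (inner ℝ (f' x) v)
    refine (((hf _).hasDerivAt_add_smul.sub hlin).sub hsq).congr_deriv ?_
    ring
  have hanti : AntitoneOn φ (Ici 0) := by
    refine antitoneOn_of_hasDerivWithinAt_nonpos (convex_Ici 0)
      (fun t _ => (hφ t).continuousAt.continuousWithinAt)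
      (fun t _ => (hφ t).hasDerivWithinAt) fun t ht => ?_
    rw [interior_Ici] at ht
    have hcs := real_inner_le_norm (f' (x + t • v) - f' x) v
    have hlip_t : ‖f' (x + t • v) - f' x‖ ≤ L * (t * ‖v‖) := by
      simpa [norm_smul, abs_of_pos (show (0 : ℝ) < t from ht)] using hlip (x + t • v) x
    rw [inner_sub_left] at hcs
    nlinarith [mul_le_mul_of_nonneg_right hlip_t (norm_nonneg v)]
  have h01 : φ 1 ≤ φ 0 := hanti self_mem_Ici (by norm_num : (1 : ℝ) ∈ Ici 0) zero_le_one
  simp only [φ, v] at h01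
  norm_num at h01
  linarith

theorem ConvexOn.sq_norm_sub_gradient_le (hconv : ConvexOn ℝ univ f)
    (hf : ∀ z, HasGradientAt f (f' z) z) (hlip : ∀ a b, ‖f' a - f' b‖ ≤ L * ‖a - b‖)
    (hL : 0 < L) (x y : E) :
    ‖f' y - f' x‖ ^ 2 ≤ 2 * L * (f y - f x - inner ℝ (f' x) (y - x)) := by
  set G := f' y - f' x
  -- `y + w` is the gradient step from `y` for `f - ⟪f' x, ·⟫`, which is minimal at `x`
  set w := -(1 / L) • G
  have hconvex := hconv.add_inner_le_of_hasGradientAt (hf x) (y + w)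
  have hdescent := le_add_inner_add_of_lipschitz_gradient hf hlip y (y + w)
  have hw : y + w - x = (y - x) + w := by abel
  rw [hw, inner_add_right] at hconvex
  rw [add_sub_cancel_left] at hdescent
  have hGw : inner ℝ (f' y) w - inner ℝ (f' x) w = -(‖G‖ ^ 2 / L) := by
    rw [← inner_sub_left, inner_smul_right, real_inner_self_eq_norm_sq]; ring
  have hnw : ‖w‖ ^ 2 = ‖G‖ ^ 2 / L ^ 2 := by
    rw [norm_smul, norm_neg, Real.norm_eq_abs, abs_of_pos (by positivity)]; field_simp
  have hhalf : L / 2 * (‖G‖ ^ 2 / L ^ 2) = ‖G‖ ^ 2 / L / 2 := by field_simp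
  have hmul : ‖G‖ ^ 2 = L * (‖G‖ ^ 2 / L) := by field_simp
  rw [hnw, hhalf] at hdescent
  rw [hmul]
  nlinarith

theorem ConvexOn.primal_averaging_potential_step {δ dk d1 : ℝ}
    (hconv : ConvexOn ℝ univ f) (hf : ∀ z, HasGradientAt f (f' z) z)
    (hlip : ∀ a b, ‖f' a - f' b‖ ≤ L * ‖a - b‖) (hL : 0 < L) {xstar : E}
    (hstar : f' xstar = 0) (hδ : 0 ≤ δ) (hdk : 0 ≤ dk) (hd1 : d1 = nextWeight L δ dk)
    {xk yk y1 : E} (hy1 : y1 = (dk / (dk + δ * L)) • yk + (δ * L / (dk + δ * L)) • xk) :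
    d1 * (f y1 - f xstar) + L / 2 * ‖xk - δ • f' y1 - xstar‖ ^ 2
      ≤ dk * (f yk - f xstar) + L / 2 * ‖xk - xstar‖ ^ 2 := by
  set g := f' y1
  have hcoco_star : ‖g‖ ^ 2 ≤ 2 * L * (f xstar - f y1 + inner ℝ g (y1 - xstar)) := by
    have h := hconv.sq_norm_sub_gradient_le hf hlip hL y1 xstar
    rwa [hstar, zero_sub, norm_neg, ← neg_sub y1 xstar, inner_neg_right, sub_neg_eq_add] at h
  have hcoco_y1 : ‖g‖ ^ 2 ≤ 2 * L * (f y1 - f xstar) := by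
    simpa [hstar] using hconv.sq_norm_sub_gradient_le hf hlip hL xstar y1
  have hconvex : f y1 - inner ℝ g (y1 - yk) ≤ f yk := by
    have h := hconv.add_inner_le_of_hasGradientAt (hf y1) yk
    rwa [← neg_sub y1 yk, inner_neg_right, ← sub_eq_add_neg] at h
  have havg : (δ * L) • (xk - y1) = dk • (y1 - yk) :=
    hy1 ▸ smul_sub_weighted_avg hdk (by positivity) yk xk
  have hinner : δ * L * inner ℝ g (xk - y1) = dk * inner ℝ g (y1 - yk) := by
    simpa only [inner_smul_right] using congrArg (inner ℝ g) havg
  have hsplit : inner ℝ g (xk - xstar) = inner ℝ g (xk - y1) + inner ℝ g (y1 - xstar) := by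
    rw [← inner_add_right, sub_add_sub_cancel]
  have hnorm : ‖xk - δ • g - xstar‖ ^ 2
      = ‖xk - xstar‖ ^ 2 - 2 * δ * inner ℝ g (xk - xstar) + δ ^ 2 * ‖g‖ ^ 2 := by
    rw [sub_right_comm, norm_sub_sq_real, inner_smul_right, norm_smul, real_inner_comm,
      Real.norm_eq_abs, mul_pow, sq_abs]
    ring
  have hweight := nextWeight_sub_mul_add_le (d := dk) hL hδ (sq_nonneg ‖g‖) hcoco_y1
  rw [hnorm, hsplit, hd1]
  nlinarith [mul_le_mul_of_nonneg_left hconvex hdk, mul_le_mul_of_nonneg_left hcoco_star hδ]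

end Gradient

/-- One-step potential inequality for primal-averaging SGD under
over-parameterization (interpolation): all `f i` share the minimizer `xstar`. -/
theorem overparam_primal_averaging_potential {d n : ℕ} (hn : 0 < n)
    (L : ℝ) (hL : 0 < L)
    (fi : Fin n → EuclideanSpace ℝ (Fin d) → ℝ)
    (fi' : Fin n → EuclideanSpace ℝ (Fin d) → EuclideanSpace ℝ (Fin d))
    (hgrad : ∀ i x, HasGradientAt (fi i) (fi' i x) x)
    (hconv : ∀ i, ConvexOn ℝ Set.univ (fi i))
    (hsmooth : ∀ i x y, ‖fi' i x - fi' i y‖ ≤ L * ‖x - y‖)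
    (xstar : EuclideanSpace ℝ (Fin d)) (hstar : ∀ i, fi' i xstar = 0)
    (f : EuclideanSpace ℝ (Fin d) → ℝ)
    (hf : ∀ x, f x = (n : ℝ)⁻¹ * ∑ i, fi i x)
    (δ dk d1 : ℝ) (hδ : 0 ≤ δ) (hdk : 0 ≤ dk)
    (hd1 : d1 = if δ ≤ 1 / L then dk + δ * L else dk + 2 * δ * L - δ ^ 2 * L ^ 2)
    (xk yk y1 : EuclideanSpace ℝ (Fin d))
    (hy1 : y1 = (dk / (dk + δ * L)) • yk + (δ * L / (dk + δ * L)) • xk)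
    (x1 : Fin n → EuclideanSpace ℝ (Fin d))
    (hx1 : ∀ i, x1 i = xk - δ • fi' i y1) :
    d1 * (f y1 - f xstar)
        + L / 2 * ((n : ℝ)⁻¹ * ∑ i, ‖x1 i - xstar‖ ^ 2)
      ≤ dk * (f yk - f xstar) + L / 2 * ‖xk - xstar‖ ^ 2 := by
  have hstep : ∀ i, d1 * (fi i y1 - fi i xstar) + L / 2 * ‖x1 i - xstar‖ ^ 2
      ≤ dk * (fi i yk - fi i xstar) + L / 2 * ‖xk - xstar‖ ^ 2 := fun i => hx1 i ▸
    (hconv i).primal_averaging_potential_step (hgrad i) (hsmooth i) hL (hstar i) hδ hdk hd1 hy1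
  have hsum := Finset.sum_le_sum fun i (_ : i ∈ Finset.univ) => hstep i
  simp only [Finset.sum_add_distrib, ← Finset.mul_sum, Finset.sum_sub_distrib, Finset.sum_const,
    Finset.card_univ, Fintype.card_fin, nsmul_eq_mul] at hsum
  have hn' : (n : ℝ) ≠ 0 := by positivity
  rw [hf, hf, hf]
  calc _ = (n : ℝ)⁻¹ * (d1 * (∑ i, fi i y1 - ∑ i, fi i xstar)
          + L / 2 * ∑ i, ‖x1 i - xstar‖ ^ 2) := by ring
    _ ≤ (n : ℝ)⁻¹ * (dk * (∑ i, fi i yk - ∑ i, fi i xstar) + L / 2 * (n * ‖xk - xstar‖ ^ 2)) :=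
        mul_le_mul_of_nonneg_left hsum (by positivity)
    _ = _ := by field_simp
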